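/- arXiv:2511.19069 — 3 statements merged into one kernel-verified Lean document; each statement's English description precedes it below -/
import Mathlib

section
/- Let T be a unital triangular algebra, n > 1 an integer, and Ψ, Ω : T → T linear maps satisfying 2Ψ(X^n) = X^(n-1)·Ω(X) + Ω(X)·X^(n-1) for all X ∈ T. If Ω(1) ∈ Z(T), then Ψ and Ω are two-sided generalized derivations on T. Explicitly, setting Δ(X) = Ω(X) − Ω(1)X, the map Δ is a derivation and Ω(XY) = Ω(X)Y + XΔ(Y) = Δ(X)Y + XΩ(Y) for all X, Y, and similarly Ψ(X) = Δ(X)/n + Ω(1)X is a two-sided generalized derivation. -/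
set_option linter.unusedSectionVars false

/-- The triangular algebra `Tri A M B`: formal upper triangular matrices
`[a m; 0 b]` with `a ∈ A`, `m ∈ M`, `b ∈ B`, where `M` is an `(A,B)`-bimodule
(the right `B`-action is encoded as a `Bᵐᵒᵖ`-action). -/
structure Tri (A M B : Type*) where
  a : A
  m : M
  b : B

namespace Tri

variable {A M B : Type*} [Ring A] [Ring B] [AddCommGroup M]
  [Module A M] [Module Bᵐᵒᵖ M] [SMulCommClass A Bᵐᵒᵖ M]

@[ext] theorem ext' {x y : Tri A M B} (ha : x.a = y.a) (hm : x.m = y.m)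
    (hb : x.b = y.b) : x = y := by
  cases x; cases y; simp_all

instance : Add (Tri A M B) := ⟨fun x y => ⟨x.a + y.a, x.m + y.m, x.b + y.b⟩⟩
instance : Zero (Tri A M B) := ⟨⟨0, 0, 0⟩⟩
instance : Neg (Tri A M B) := ⟨fun x => ⟨-x.a, -x.m, -x.b⟩⟩
instance : One (Tri A M B) := ⟨⟨1, 0, 1⟩⟩
instance : Mul (Tri A M B) :=
  ⟨fun x y => ⟨x.a * y.a, x.a • y.m + MulOpposite.op y.b • x.m, x.b * y.b⟩⟩

@[simp] lemma add_a (x y : Tri A M B) : (x + y).a = x.a + y.a := rfl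
@[simp] lemma add_m (x y : Tri A M B) : (x + y).m = x.m + y.m := rfl
@[simp] lemma add_b (x y : Tri A M B) : (x + y).b = x.b + y.b := rfl
@[simp] lemma zero_a : (0 : Tri A M B).a = 0 := rfl
@[simp] lemma zero_m : (0 : Tri A M B).m = 0 := rfl
@[simp] lemma zero_b : (0 : Tri A M B).b = 0 := rfl
@[simp] lemma neg_a (x : Tri A M B) : (-x).a = -x.a := rfl
@[simp] lemma neg_m (x : Tri A M B) : (-x).m = -x.m := rfl
@[simp] lemma neg_b (x : Tri A M B) : (-x).b = -x.b := rfl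
@[simp] lemma one_a : (1 : Tri A M B).a = 1 := rfl
@[simp] lemma one_m : (1 : Tri A M B).m = 0 := rfl
@[simp] lemma one_b : (1 : Tri A M B).b = 1 := rfl
@[simp] lemma mul_a (x y : Tri A M B) : (x * y).a = x.a * y.a := rfl
@[simp] lemma mul_m (x y : Tri A M B) :
    (x * y).m = x.a • y.m + MulOpposite.op y.b • x.m := rfl
@[simp] lemma mul_b (x y : Tri A M B) : (x * y).b = x.b * y.b := rfl

instance instRing : Ring (Tri A M B) where
  nsmul := nsmulRec
  zsmul := zsmulRec
  add_assoc := by intros; ext <;> simp [add_assoc]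
  zero_add := by intros; ext <;> simp
  add_zero := by intros; ext <;> simp
  add_comm := by intros; ext <;> simp [add_comm]
  neg_add_cancel := by intros; ext <;> simp
  mul_assoc := by
    intros x y z
    ext
    · simp [mul_assoc]
    · simp [mul_smul, smul_add, smul_comm, add_assoc]
    · simp [mul_assoc]
  one_mul := by intros; ext <;> simp
  mul_one := by intros; ext <;> simp
  left_distrib := by
    intros x y z
    ext <;> simp [mul_add, smul_add, add_smul] <;> abel
  right_distrib := by
    intros x y z
    ext <;> simp [add_mul, add_smul, smul_add] <;> abel
  zero_mul := by intros; ext <;> simp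
  mul_zero := by intros; ext <;> simp


instance instSMul {S : Type*} [SMul S A] [SMul S M] [SMul S B] : SMul S (Tri A M B) :=
  ⟨fun c x => ⟨c • x.a, c • x.m, c • x.b⟩⟩

@[simp] lemma smul_a {S : Type*} [SMul S A] [SMul S M] [SMul S B] (c : S) (x : Tri A M B) :
    (c • x).a = c • x.a := rfl
@[simp] lemma smul_m {S : Type*} [SMul S A] [SMul S M] [SMul S B] (c : S) (x : Tri A M B) :
    (c • x).m = c • x.m := rfl
@[simp] lemma smul_b {S : Type*} [SMul S A] [SMul S M] [SMul S B] (c : S) (x : Tri A M B) :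
    (c • x).b = c • x.b := rfl

end Tri

/-!
Substituting `1 + s • X` for `X` in `2 Ψ(X^n) = X^(n-1) Ω(X) + Ω(X) X^(n-1)` gives a polynomial
identity in the scalar `s`. Its coefficients of `s` and `s²` give
`n Ψ(X) = Ω(X) + (n - 1) Ω(1) X` and `Ω(X²) = X Ω(X) + Ω(X) X - Ω(1) X²`, so that
`Δ = Ω - Ω(1) ·` is a Jordan derivation. On a 2-torsion free triangular algebra every Jordan
derivation is a derivation: after subtracting the inner derivation by `d e₁₁`, a Jordan
derivation preserves the three corners `A`, `M`, `B`, it satisfies the Leibniz rule for the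
actions of `A` and `B` on `M`, and faithfulness of `M` transfers this to the Leibniz rule on
`A` and on `B`. As `Ω(1)` is central, `Ω = Δ + Ω(1) ·` and `Ψ = Δ / n + Ω(1) ·` are then
two-sided generalized derivations.
-/

open Finset

section Derivations

def IsDerivation {R : Type*} [NonUnitalRing R] (d : R →+ R) : Prop :=
  ∀ x y, d (x * y) = d x * y + x * d y

def IsJordanDerivation {R : Type*} [NonUnitalRing R] (d : R →+ R) : Prop :=
  ∀ x, d (x * x) = d x * x + x * d x

variable {R : Type*} [NonUnitalRing R]

theorem IsDerivation.isJordanDerivation {d : R →+ R} (hd : IsDerivation d) :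
    IsJordanDerivation d :=
  fun x => hd x x

theorem IsDerivation.sub {d g : R →+ R} (hd : IsDerivation d) (hg : IsDerivation g) :
    IsDerivation (d - g) := by
  intro x y
  simp only [AddMonoidHom.sub_apply, hd x y, hg x y, sub_mul, mul_sub]
  abel

theorem IsJordanDerivation.add {d g : R →+ R} (hd : IsJordanDerivation d)
    (hg : IsJordanDerivation g) : IsJordanDerivation (d + g) := by
  intro x
  simp only [AddMonoidHom.add_apply, hd x, hg x, add_mul, mul_add]
  abel

theorem isDerivation_mulLeft_sub_mulRight (c : R) :
    IsDerivation (AddMonoidHom.mulLeft c - AddMonoidHom.mulRight c) := by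
  intro x y
  simp only [AddMonoidHom.sub_apply, AddMonoidHom.coe_mulLeft, AddMonoidHom.coe_mulRight,
    sub_mul, mul_sub, mul_assoc]
  abel

theorem IsJordanDerivation.map_mul_add_mul_swap {d : R →+ R} (hd : IsJordanDerivation d)
    (x y : R) : d (x * y + y * x) = d x * y + x * d y + (d y * x + y * d x) := by
  have h := hd (x + y)
  simp only [add_mul, mul_add, map_add, hd x, hd y] at h
  rw [map_add, ← sub_eq_zero, ← sub_eq_zero.mpr h]
  abel

theorem IsDerivation.map_mul_of_forall_eq_add_mul {d : R →+ R} (hd : IsDerivation d) {c : R}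
    (hc : ∀ y, Commute c y) {F : R → R} (hF : ∀ x, F x = d x + c * x) (x y : R) :
    F (x * y) = F x * y + x * d y ∧ F (x * y) = d x * y + x * F y := by
  rw [hF, hF, hF, hd x y]
  refine ⟨?_, ?_⟩
  · rw [add_mul, mul_assoc]
    abel
  · rw [mul_add, ← mul_assoc x c, ← (hc x).eq, mul_assoc]
    abel

theorem IsDerivation.smul {K S : Type*} [CommSemiring K] [Ring S] [Algebra K S] {d : S →+ S}
    (hd : IsDerivation d) (c : K) : IsDerivation (c • d) := by
  intro x y
  simp only [AddMonoidHom.smul_apply, hd x y, smul_add, smul_mul_assoc, mul_smul_comm]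

end Derivations

namespace Tri

variable {A M B : Type*} [Ring A] [Ring B] [AddCommGroup M]
  [Module A M] [Module Bᵐᵒᵖ M] [SMulCommClass A Bᵐᵒᵖ M]

instance instModule {S : Type*} [Semiring S] [Module S A] [Module S M] [Module S B] :
    Module S (Tri A M B) where
  one_smul x := by ext <;> simp
  mul_smul c d x := by ext <;> simp [mul_smul]
  smul_zero c := by ext <;> simp
  smul_add c x y := by ext <;> simp
  add_smul c d x := by ext <;> simp [add_smul]
  zero_smul x := by ext <;> simp

instance instAlgebraRat [Module ℚ A] [Module ℚ M] [Module ℚ B] : Algebra ℚ (Tri A M B) :=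
  Algebra.ofModule (fun q x y => map_rat_smul (AddMonoidHom.mulRight y) q x)
    (fun q x y => map_rat_smul (AddMonoidHom.mulLeft x) q y)

@[simp] lemma mk_add_mk (a a' : A) (m m' : M) (b b' : B) :
    (⟨a, m, b⟩ + ⟨a', m', b'⟩ : Tri A M B) = ⟨a + a', m + m', b + b'⟩ := rfl

@[simp] lemma mk_mul_mk (a a' : A) (m m' : M) (b b' : B) :
    (⟨a, m, b⟩ * ⟨a', m', b'⟩ : Tri A M B) = ⟨a * a', a • m' + MulOpposite.op b' • m, b * b'⟩ :=
  rfl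

def e₁₁ : Tri A M B := ⟨1, 0, 0⟩

variable {d : Tri A M B →+ Tri A M B}

theorem map_e₁₁_eq (hd : IsJordanDerivation d) : d e₁₁ = ⟨0, (d e₁₁).m, 0⟩ := by
  have h := hd e₁₁
  have he : (e₁₁ * e₁₁ : Tri A M B) = e₁₁ := by simp [e₁₁]
  rw [he] at h
  ext
  · simpa [e₁₁] using congrArg Tri.a h
  · rfl
  · simpa [e₁₁] using congrArg Tri.b h

theorem map_mul_e₁₁_add_e₁₁_mul (hd : IsJordanDerivation d) (hde : d e₁₁ = 0) (x : Tri A M B) :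
    d (x * e₁₁ + e₁₁ * x) = ⟨(d x).a + (d x).a, (d x).m, 0⟩ := by
  rw [hd.map_mul_add_mul_swap, hde]
  ext <;> simp [e₁₁]

theorem map_cornerA (hd : IsJordanDerivation d) (hde : d e₁₁ = 0)
    (hB : ∀ b : B, b + b = 0 → b = 0) (a : A) : d ⟨a, 0, 0⟩ = ⟨(d ⟨a, 0, 0⟩).a, 0, 0⟩ := by
  have h := map_mul_e₁₁_add_e₁₁_mul hd hde ⟨a, 0, 0⟩
  have hx : (⟨a, 0, 0⟩ * e₁₁ + e₁₁ * ⟨a, 0, 0⟩ : Tri A M B) = ⟨a, 0, 0⟩ + ⟨a, 0, 0⟩ := by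
    simp [e₁₁]
  rw [hx, map_add] at h
  ext
  · rfl
  · simpa using congrArg Tri.m h
  · exact hB _ (by simpa using congrArg Tri.b h)

theorem map_cornerM (hd : IsJordanDerivation d) (hde : d e₁₁ = 0) (m : M) :
    d ⟨0, m, 0⟩ = ⟨0, (d ⟨0, m, 0⟩).m, 0⟩ := by
  have h := map_mul_e₁₁_add_e₁₁_mul hd hde ⟨0, m, 0⟩
  have hx : (⟨0, m, 0⟩ * e₁₁ + e₁₁ * ⟨0, m, 0⟩ : Tri A M B) = ⟨0, m, 0⟩ := by simp [e₁₁]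
  rw [hx] at h
  ext
  · simpa using congrArg Tri.a h
  · rfl
  · simpa using congrArg Tri.b h

theorem map_cornerB (hd : IsJordanDerivation d) (hde : d e₁₁ = 0)
    (hA : ∀ a : A, a + a = 0 → a = 0) (b : B) : d ⟨0, 0, b⟩ = ⟨0, 0, (d ⟨0, 0, b⟩).b⟩ := by
  have h := map_mul_e₁₁_add_e₁₁_mul hd hde ⟨0, 0, b⟩
  have hx : (⟨0, 0, b⟩ * e₁₁ + e₁₁ * ⟨0, 0, b⟩ : Tri A M B) = 0 := by ext <;> simp [e₁₁]
  rw [hx, map_zero] at h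
  ext
  · exact hA _ (by simpa using (congrArg Tri.a h).symm)
  · simpa using (congrArg Tri.m h).symm
  · rfl

theorem map_cornerM_smul (hd : IsJordanDerivation d) (hde : d e₁₁ = 0)
    (hB : ∀ b : B, b + b = 0 → b = 0) (a : A) (m : M) :
    (d ⟨0, a • m, 0⟩).m = (d ⟨a, 0, 0⟩).a • m + a • (d ⟨0, m, 0⟩).m := by
  have h := hd.map_mul_add_mul_swap ⟨a, 0, 0⟩ ⟨0, m, 0⟩
  rw [map_cornerA hd hde hB, map_cornerM hd hde] at h
  simpa using congrArg Tri.m h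

theorem map_cornerM_op_smul (hd : IsJordanDerivation d) (hde : d e₁₁ = 0)
    (hA : ∀ a : A, a + a = 0 → a = 0) (b : B) (m : M) :
    (d ⟨0, MulOpposite.op b • m, 0⟩).m =
      MulOpposite.op b • (d ⟨0, m, 0⟩).m + MulOpposite.op (d ⟨0, 0, b⟩).b • m := by
  have h := hd.map_mul_add_mul_swap ⟨0, 0, b⟩ ⟨0, m, 0⟩
  rw [map_cornerB hd hde hA, map_cornerM hd hde] at h
  simpa [add_comm] using congrArg Tri.m h

theorem map_cornerA_mul (hfA : ∀ a : A, (∀ m : M, a • m = 0) → a = 0)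
    (hd : IsJordanDerivation d) (hde : d e₁₁ = 0) (hB : ∀ b : B, b + b = 0 → b = 0)
    (a a' : A) :
    (d ⟨a * a', 0, 0⟩).a = (d ⟨a, 0, 0⟩).a * a' + a * (d ⟨a', 0, 0⟩).a := by
  rw [← sub_eq_zero]
  refine hfA _ fun m => ?_
  have h := map_cornerM_smul hd hde hB (a * a') m
  rw [mul_smul, map_cornerM_smul hd hde hB, map_cornerM_smul hd hde hB, smul_add, mul_smul,
    ← add_assoc] at h
  rw [sub_smul, add_smul, mul_smul, mul_smul, sub_eq_zero]
  exact (add_right_cancel h).symm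

theorem map_cornerB_mul (hfB : ∀ b : B, (∀ m : M, MulOpposite.op b • m = 0) → b = 0)
    (hd : IsJordanDerivation d) (hde : d e₁₁ = 0) (hA : ∀ a : A, a + a = 0 → a = 0)
    (b b' : B) :
    (d ⟨0, 0, b * b'⟩).b = (d ⟨0, 0, b⟩).b * b' + b * (d ⟨0, 0, b'⟩).b := by
  rw [← sub_eq_zero]
  refine hfB _ fun m => ?_
  have h := map_cornerM_op_smul hd hde hA (b * b') m
  rw [MulOpposite.op_mul, mul_smul, map_cornerM_op_smul hd hde hA,
    map_cornerM_op_smul hd hde hA, smul_add, ← mul_smul, ← MulOpposite.op_mul, add_assoc] at h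
  simp only [MulOpposite.op_sub, MulOpposite.op_add, MulOpposite.op_mul, sub_smul, add_smul,
    mul_smul, sub_eq_zero]
  exact (add_left_cancel h).symm

theorem map_eq_mk (hd : IsJordanDerivation d) (hde : d e₁₁ = 0)
    (hA : ∀ a : A, a + a = 0 → a = 0) (hB : ∀ b : B, b + b = 0 → b = 0) (x : Tri A M B) :
    d x = ⟨(d ⟨x.a, 0, 0⟩).a, (d ⟨0, x.m, 0⟩).m, (d ⟨0, 0, x.b⟩).b⟩ := by
  have hx : x = ⟨x.a, 0, 0⟩ + ⟨0, x.m, 0⟩ + ⟨0, 0, x.b⟩ := by ext <;> simp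
  conv_lhs =>
    rw [hx, map_add, map_add, map_cornerA hd hde hB, map_cornerM hd hde, map_cornerB hd hde hA]
  ext <;> simp

theorem isDerivation_of_map_e₁₁_eq_zero (hfA : ∀ a : A, (∀ m : M, a • m = 0) → a = 0)
    (hfB : ∀ b : B, (∀ m : M, MulOpposite.op b • m = 0) → b = 0)
    (hA : ∀ a : A, a + a = 0 → a = 0) (hB : ∀ b : B, b + b = 0 → b = 0)
    (hd : IsJordanDerivation d) (hde : d e₁₁ = 0) : IsDerivation d := by
  have hadd : ∀ m m' : M, (d ⟨0, m + m', 0⟩).m = (d ⟨0, m, 0⟩).m + (d ⟨0, m', 0⟩).m :=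
    fun m m' => by simpa using congrArg Tri.m (map_add d ⟨0, m, 0⟩ ⟨0, m', 0⟩)
  intro x y
  rw [map_eq_mk hd hde hA hB (x * y), map_eq_mk hd hde hA hB x, map_eq_mk hd hde hA hB y]
  ext
  · exact map_cornerA_mul hfA hd hde hB x.a y.a
  · simp only [mul_m, add_m, hadd, map_cornerM_smul hd hde hB, map_cornerM_op_smul hd hde hA]
    abel
  · exact map_cornerB_mul hfB hd hde hA x.b y.b

theorem isDerivation_of_isJordanDerivation (hfA : ∀ a : A, (∀ m : M, a • m = 0) → a = 0)
    (hfB : ∀ b : B, (∀ m : M, MulOpposite.op b • m = 0) → b = 0)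
    (hA : ∀ a : A, a + a = 0 → a = 0) (hB : ∀ b : B, b + b = 0 → b = 0)
    (hd : IsJordanDerivation d) : IsDerivation d := by
  set ad := AddMonoidHom.mulLeft (d e₁₁) - AddMonoidHom.mulRight (d e₁₁)
  have had : IsDerivation ad := isDerivation_mulLeft_sub_mulRight _
  -- `d e₁₁` lies in the corner `M`, so `e₁₁ * d e₁₁ = d e₁₁` and `d e₁₁ * e₁₁ = 0`.
  have hde : (d + ad) e₁₁ = 0 := by
    simp only [ad, AddMonoidHom.add_apply, AddMonoidHom.sub_apply, AddMonoidHom.coe_mulLeft,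
      AddMonoidHom.coe_mulRight]
    rw [map_e₁₁_eq hd]
    ext <;> simp [e₁₁]
  simpa using (isDerivation_of_map_e₁₁_eq_zero hfA hfB hA hB
    (hd.add had.isJordanDerivation) hde).sub had

end Tri

theorem eq_zero_of_add_self_eq_zero {V : Type*} [AddCommGroup V] [Module ℚ V] {v : V}
    (h : v + v = 0) : v = 0 := by
  simpa using congrArg ((2 : ℚ)⁻¹ • ·) ((two_smul ℚ v).trans h)

theorem eq_zero_of_forall_sum_pow_smul_eq_zero {K V : Type*} [Field K] [Infinite K]
    [AddCommGroup V] [Module K V] {N : ℕ} {c : ℕ → V}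
    (h : ∀ s : K, ∑ k ∈ range N, s ^ k • c k = 0) {k : ℕ} (hk : k < N) : c k = 0 := by
  refine (Module.forall_dual_apply_eq_zero_iff K (c k)).1 fun φ => ?_
  have hp : ∑ j ∈ range N, Polynomial.C (φ (c j)) * Polynomial.X ^ j = 0 :=
    Polynomial.funext fun s => by
      have hs := congrArg φ (h s)
      simp only [map_sum, map_smul, smul_eq_mul, map_zero] at hs
      rw [Polynomial.eval_finsetSum, Polynomial.eval_zero, ← hs]
      refine sum_congr rfl fun j _ => ?_
      rw [Polynomial.eval_mul, Polynomial.eval_C, Polynomial.eval_pow, Polynomial.eval_X,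
        mul_comm]
  simpa [Polynomial.finsetSum_coeff, Polynomial.coeff_C_mul_X_pow, hk] using
    congrArg (Polynomial.coeff · k) hp

theorem one_add_smul_pow {K R : Type*} [CommSemiring K] [Semiring R] [Algebra K R]
    (s : K) (X : R) (m : ℕ) :
    (1 + s • X) ^ m = ∑ k ∈ range (m + 1), s ^ k • ((m.choose k : K) • X ^ k) := by
  rw [add_comm, (Commute.one_right _).add_pow]
  refine sum_congr rfl fun k _ => ?_
  rw [one_pow, mul_one, smul_pow, smul_mul_assoc, ← nsmul_eq_mul', Nat.cast_smul_eq_nsmul]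

section PowerIdentity

variable {K R : Type*} [Field K] [Ring R] [Algebra K R] {Ψ Ω : R →ₗ[K] R} {n : ℕ}

/-- The coefficient of `s ^ (j + 1)` in the identity for `1 + s • X`. -/
theorem choose_smul_map_pow [Infinite K]
    (h : ∀ X, 2 • Ψ (X ^ (n + 1)) = X ^ n * Ω X + Ω X * X ^ n) (X : R) {j : ℕ} (hj : j ≤ n) :
    (2 * (n + 1).choose (j + 1) : K) • Ψ (X ^ (j + 1)) =
      (n.choose (j + 1) : K) • (X ^ (j + 1) * Ω 1 + Ω 1 * X ^ (j + 1)) +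
        (n.choose j : K) • (X ^ j * Ω X + Ω X * X ^ j) := by
  set b : ℕ → R := fun k => (n.choose k : K) • (X ^ k * Ω 1 + Ω 1 * X ^ k)
  set c : ℕ → R := fun k => (n.choose k : K) • (X ^ k * Ω X + Ω X * X ^ k)
  set c' : ℕ → R := fun | 0 => 0 | k + 1 => c k
  have hs : ∀ s : K, ∑ k ∈ range (n + 2), s ^ k •
      ((2 * (n + 1).choose k : K) • Ψ (X ^ k) - b k - c' k) = 0 := by
    intro s
    set P := (1 + s • X) ^ n
    have hP : P = ∑ k ∈ range (n + 1), s ^ k • ((n.choose k : K) • X ^ k) :=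
      one_add_smul_pow s X n
    have hΨ : 2 • Ψ ((1 + s • X) ^ (n + 1)) =
        ∑ k ∈ range (n + 2), s ^ k • ((2 * (n + 1).choose k : K) • Ψ (X ^ k)) := by
      rw [one_add_smul_pow, map_sum, smul_sum]
      refine sum_congr rfl fun k _ => ?_
      rw [map_smul, map_smul, ← Nat.cast_smul_eq_nsmul K, smul_comm, Nat.cast_ofNat, ← smul_smul]
    have hb : P * Ω 1 + Ω 1 * P = ∑ k ∈ range (n + 2), s ^ k • b k := by
      rw [sum_range_succ, hP, sum_mul, mul_sum, ← sum_add_distrib]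
      simp [b, Nat.choose_succ_self, smul_add]
    have hc : P * Ω X + Ω X * P = ∑ k ∈ range (n + 1), s ^ k • c k := by
      rw [hP, sum_mul, mul_sum, ← sum_add_distrib]
      simp [c, smul_add]
    have hc' : s • ∑ k ∈ range (n + 1), s ^ k • c k = ∑ k ∈ range (n + 2), s ^ k • c' k := by
      rw [sum_range_succ' _ (n + 1), smul_sum]
      simp [c', pow_succ, mul_smul, smul_comm s]
    have := h (1 + s • X)
    rw [hΨ, map_add, map_smul, mul_add, add_mul, mul_smul_comm, smul_mul_assoc] at this
    simp only [smul_sub, sum_sub_distrib, this, ← hb, ← hc', ← hc, smul_add]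
    abel
  have := eq_zero_of_forall_sum_pow_smul_eq_zero hs (k := j + 1) (by omega)
  rwa [sub_sub, sub_eq_zero] at this

variable [CharZero K]

theorem succ_smul_map (h : ∀ X, 2 • Ψ (X ^ (n + 1)) = X ^ n * Ω X + Ω X * X ^ n)
    (hΩ : ∀ Y, Commute (Ω 1) Y) (X : R) :
    ((n : K) + 1) • Ψ X = Ω X + (n : K) • (Ω 1 * X) := by
  have h0 := choose_smul_map_pow h X n.zero_le
  simp only [zero_add, pow_one, pow_zero, one_mul, mul_one, Nat.choose_one_right,
    Nat.choose_zero_right, ← (hΩ X).eq] at h0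
  push_cast at h0
  linear_combination (norm := module) (2 : K)⁻¹ • h0

theorem map_mul_self (h : ∀ X, 2 • Ψ (X ^ (n + 1)) = X ^ n * Ω X + Ω X * X ^ n)
    (hΩ : ∀ Y, Commute (Ω 1) Y) (hn : n ≠ 0) (X : R) :
    Ω (X * X) = X * Ω X + Ω X * X - Ω 1 * (X * X) := by
  have h1 := choose_smul_map_pow h X (Nat.one_le_iff_ne_zero.2 hn)
  have h0 := succ_smul_map h hΩ (X * X)
  simp only [Nat.choose_one_right, pow_one, ← (hΩ (X ^ 2)).eq] at h1
  rw [Nat.cast_choose_two, Nat.cast_choose_two] at h1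
  rw [← sq] at h0 ⊢
  push_cast at h1
  apply smul_right_injective R (show (n : K) ≠ 0 by exact_mod_cast hn)
  linear_combination (norm := module) h1 - (n : K) • h0

theorem map_eq_inv_smul_add (h : ∀ X, 2 • Ψ (X ^ (n + 1)) = X ^ n * Ω X + Ω X * X ^ n)
    (hΩ : ∀ Y, Commute (Ω 1) Y) (X : R) :
    Ψ X = ((n : K) + 1)⁻¹ • (Ω X - Ω 1 * X) + Ω 1 * X := by
  have hn : (n : K) + 1 ≠ 0 := Nat.cast_add_one_ne_zero n
  apply smul_right_injective R hn
  simp only [smul_add, smul_inv_smul₀ hn]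
  linear_combination (norm := module) succ_smul_map h hΩ X

theorem isJordanDerivation_sub_mulLeft
    (h : ∀ X, 2 • Ψ (X ^ (n + 1)) = X ^ n * Ω X + Ω X * X ^ n)
    (hΩ : ∀ Y, Commute (Ω 1) Y) (hn : n ≠ 0) :
    IsJordanDerivation (Ω.toAddMonoidHom - AddMonoidHom.mulLeft (Ω 1)) := by
  intro X
  simp only [AddMonoidHom.sub_apply, AddMonoidHom.coe_mulLeft, LinearMap.toAddMonoidHom_coe,
    map_mul_self h hΩ hn, sub_mul, mul_sub, ← mul_assoc, ← (hΩ X).eq]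
  abel

end PowerIdentity

/-- Theorem 2.5: on a unital triangular algebra (over ℚ, so that division by $n$
makes sense), linear maps with $2Ψ(X^n) = X^{n-1}Ω(X) + Ω(X)X^{n-1}$ and $Ω(1)$
central are two-sided generalized derivations; explicitly $Δ(X) = Ω(X) − Ω(1)X$ is
a derivation, $Ω(XY) = Ω(X)Y + XΔ(Y) = Δ(X)Y + XΩ(Y)$, and
$Ψ(X) = Δ(X)/n + Ω(1)X$ is a two-sided generalized derivation as well. -/
theorem stmt_3 {A M B : Type*} [Ring A] [Ring B] [AddCommGroup M]
    [Algebra ℚ A] [Algebra ℚ B] [Module ℚ M]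
    [Module A M] [Module Bᵐᵒᵖ M] [SMulCommClass A Bᵐᵒᵖ M]
    (hfA : ∀ a : A, (∀ m : M, a • m = 0) → a = 0)
    (hfB : ∀ b : B, (∀ m : M, MulOpposite.op b • m = 0) → b = 0)
    (n : ℕ) (hn : 1 < n)
    (Ψ Ω : Tri A M B → Tri A M B)
    (hΨadd : ∀ X Y, Ψ (X + Y) = Ψ X + Ψ Y)
    (hΩadd : ∀ X Y, Ω (X + Y) = Ω X + Ω Y)
    (h1 : ∀ X, 2 • Ψ (X ^ n) = X ^ (n - 1) * Ω X + Ω X * X ^ (n - 1))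
    (hΩ1 : ∀ Y, Ω 1 * Y = Y * Ω 1) :
    ∃ Δ : Tri A M B → Tri A M B,
      (∀ X, Δ X = Ω X - Ω 1 * X) ∧
      (∀ X Y, Δ (X * Y) = Δ X * Y + X * Δ Y) ∧
      (∀ X Y, Ω (X * Y) = Ω X * Y + X * Δ Y ∧ Ω (X * Y) = Δ X * Y + X * Ω Y) ∧
      (∀ X, Ψ X = ((n : ℚ)⁻¹) • Δ X + Ω 1 * X) ∧
      (∀ X Y, Ψ (X * Y) = Ψ X * Y + X * ((n : ℚ)⁻¹ • Δ Y) ∧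
        Ψ (X * Y) = ((n : ℚ)⁻¹ • Δ X) * Y + X * Ψ Y) := by
  obtain ⟨n, rfl⟩ : ∃ k, n = k + 1 := ⟨n - 1, by omega⟩
  let Ψ' := (AddMonoidHom.mk' Ψ hΨadd).toRatLinearMap
  let Ω' := (AddMonoidHom.mk' Ω hΩadd).toRatLinearMap
  have h : ∀ X, 2 • Ψ' (X ^ (n + 1)) = X ^ n * Ω' X + Ω' X * X ^ n := h1
  have hΩ : ∀ Y, Commute (Ω' 1) Y := hΩ1
  let Δ := Ω'.toAddMonoidHom - AddMonoidHom.mulLeft (Ω 1)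
  have hΔ : IsDerivation Δ :=
    Tri.isDerivation_of_isJordanDerivation hfA hfB (fun _ => eq_zero_of_add_self_eq_zero)
      (fun _ => eq_zero_of_add_self_eq_zero) (isJordanDerivation_sub_mulLeft h hΩ (by omega))
  have hΩΔ : ∀ X, Ω X = Δ X + Ω 1 * X := fun X => (sub_add_cancel _ _).symm
  have hΨΔ : ∀ X, Ψ X = (((n + 1 : ℕ) : ℚ))⁻¹ • Δ X + Ω 1 * X := by
    intro X
    rw [Nat.cast_succ]
    exact map_eq_inv_smul_add h hΩ X
  exact ⟨Δ, fun X => rfl, hΔ, hΔ.map_mul_of_forall_eq_add_mul hΩ hΩΔ, hΨΔ,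
    (hΔ.smul _).map_mul_of_forall_eq_add_mul hΩ hΨΔ⟩
end

section
/- Let R be a unital algebra over a field of characteristic zero, n > 1 an integer, γ a central invertible element, and Ψ, Ω : R → R additive maps satisfying Ψ(X^n) = γ·X^(n-1)·Ω(X) = γ·Ω(X)·X^(n-1) for all X ∈ R. Then Ω(X)·X = X·Ω(X) for all X ∈ R, i.e., Ω is a commuting map, and the map Δ(X) = Ω(X) − Ω(1)·X is a Jordan derivation satisfying Δ(X)·X = X·Δ(X) for all X, provided Ω(1) is central. -/
/-!
Substitute `y = 1 + m • x` with `m : ℕ`. Both identities then become polynomial identities in `m`,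
and since `R` is a vector space over a field of characteristic zero, a polynomial over `R` that
vanishes at every natural number is zero, so coefficients may be compared. In
`y ^ k * Ω y = Ω y * y ^ k` the coefficients of `m` and `m²` show that `Ω 1` is central and then
that `Ω` is commuting. In `Ψ (y ^ (k + 1)) = γ * (y ^ k * Ω y)` they give
`(k + 1) Ψ x = γ (k x Ω 1 + Ω x)` and `C(k+1, 2) Ψ (x²) = γ (C(k, 2) x² Ω 1 + k x Ω x)`;
eliminating `Ψ (x²)` leaves `Ω (x²) + x² Ω 1 = 2 x Ω x`, which is the Jordan identity for
`Δ x = Ω x - Ω 1 * x`.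
-/

open Polynomial

namespace Polynomial

section MapAdd

variable {R S : Type*} [Semiring R] [Semiring S]

theorem coeff_sum_monomial_map_coeff (F : R →+ S) (p : R[X]) (n : ℕ) :
    (∑ k ∈ p.support, monomial k (F (p.coeff k))).coeff n = F (p.coeff n) := by
  simp only [finsetSum_coeff, coeff_monomial, Finset.sum_ite_eq', mem_support_iff]
  split_ifs with h
  · rfl
  · rw [notMem_support_iff.mp h, map_zero]

noncomputable def mapAdd (F : R →+ S) : R[X] →+ S[X] where
  toFun p := ∑ k ∈ p.support, monomial k (F (p.coeff k))
  map_zero' := by simp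
  map_add' p q := by
    ext n
    rw [coeff_add, coeff_sum_monomial_map_coeff, coeff_sum_monomial_map_coeff,
      coeff_sum_monomial_map_coeff, coeff_add, map_add]

@[simp]
theorem coeff_mapAdd (F : R →+ S) (p : R[X]) (n : ℕ) : (mapAdd F p).coeff n = F (p.coeff n) :=
  coeff_sum_monomial_map_coeff F p n

theorem mapAdd_monomial (F : R →+ S) (n : ℕ) (a : R) :
    mapAdd F (monomial n a) = monomial n (F a) := by
  ext k
  simp only [coeff_mapAdd, coeff_monomial]
  split_ifs <;> simp

/-- Over a noncommutative ring, evaluation is multiplicative only at central points, such as the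
natural numbers. -/
noncomputable def evalNat (m : ℕ) : R[X] →+* R :=
  eval₂RingHom' (RingHom.id R) m fun a => (Nat.cast_commute m a).symm

theorem evalNat_apply (m : ℕ) (p : R[X]) : evalNat m p = p.eval (m : R) := rfl

theorem evalNat_C (m : ℕ) (a : R) : evalNat m (C a) = a :=
  eval_C

theorem evalNat_mapAdd (F : R →+ S) (p : R[X]) (m : ℕ) :
    evalNat m (mapAdd F p) = F (evalNat m p) := by
  induction p using Polynomial.induction_on' with
  | add p q hp hq => simp only [map_add, hp, hq]
  | monomial n a =>
    simp only [mapAdd_monomial, evalNat_apply, eval_monomial, ← Nat.cast_pow, ← nsmul_eq_mul',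
      map_nsmul]

end MapAdd

section NatPoints

variable {R : Type*} [Ring R]

theorem eq_zero_of_forall_evalNat_eq_zero (𝕜 : Type*) [Field 𝕜] [CharZero 𝕜] [Module 𝕜 R] {p : R[X]} (h : ∀ m : ℕ, evalNat m p = 0) :
    p = 0 := by
  ext i
  rw [coeff_zero, ← Module.forall_dual_apply_eq_zero_iff 𝕜]
  intro φ
  have hφp : mapAdd φ.toAddMonoidHom p = 0 := by
    refine eq_zero_of_infinite_isRoot _
      ((Set.infinite_range_of_injective Nat.cast_injective).mono ?_)
    rintro _ ⟨m, rfl⟩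
    simpa [← evalNat_apply, evalNat_mapAdd] using congrArg φ (h m)
  simpa using congrArg (coeff · i) hφp

theorem eq_of_forall_evalNat_eq (𝕜 : Type*) [Field 𝕜] [CharZero 𝕜] [Module 𝕜 R] {p q : R[X]} (h : ∀ m : ℕ, evalNat m p = evalNat m q) :
    p = q :=
  sub_eq_zero.mp <| eq_zero_of_forall_evalNat_eq_zero 𝕜 fun m => by rw [map_sub, h, sub_self]

end NatPoints

section Line

variable {R S : Type*} [Semiring R] [Semiring S]

theorem coeff_one_add_C_mul_X_pow (x : R) (k j : ℕ) :
    ((1 + C x * X) ^ k).coeff j = k.choose j • x ^ j := by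
  rw [add_comm, (Commute.one_right _).add_pow]
  simp only [one_pow, mul_one, finsetSum_coeff, ((commute_X (C x)).symm).mul_pow, ← C_pow,
    coeff_mul_natCast, coeff_C_mul_X_pow]
  rw [Finset.sum_eq_single j]
  · simp [Nat.cast_comm]
  · intro b _ hb
    simp [hb.symm]
  · intro hj
    rw [Finset.mem_range, not_lt] at hj
    simp [Nat.choose_eq_zero_of_lt (Nat.lt_of_succ_le hj)]

theorem mapAdd_one_add_C_mul_X (F : R →+ S) (x : R) :
    mapAdd F (1 + C x * X) = C (F 1) + C (F x) * X := by
  ext n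
  rcases n with _ | _ | n <;> simp [coeff_one, coeff_C]

theorem coeff_mul_C_add_C_mul_X_succ (p : R[X]) (a b : R) (n : ℕ) :
    (p * (C a + C b * X)).coeff (n + 1) = p.coeff (n + 1) * a + p.coeff n * b := by
  rw [mul_add, ← mul_assoc, coeff_add, coeff_mul_C, coeff_mul_X, coeff_mul_C]

theorem coeff_C_add_C_mul_X_mul_succ (p : R[X]) (a b : R) (n : ℕ) :
    ((C a + C b * X) * p).coeff (n + 1) = a * p.coeff (n + 1) + b * p.coeff n := by
  rw [add_mul, mul_assoc, coeff_add, coeff_C_mul, coeff_C_mul, coeff_X_mul]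

end Line

section Linearization

variable {R : Type*} [Ring R]

theorem commute_one_add_C_mul_X_pow_mapAdd (𝕜 : Type*) [Field 𝕜] [CharZero 𝕜] [Module 𝕜 R]
    {Ω : R →+ R} {k : ℕ} (h : ∀ y, Commute (y ^ k) (Ω y)) (x : R) :
    Commute ((1 + C x * X) ^ k) (mapAdd Ω (1 + C x * X)) :=
  eq_of_forall_evalNat_eq 𝕜 fun m => by
    simpa only [map_mul, map_pow, evalNat_mapAdd] using (h _).eq

theorem mapAdd_one_add_C_mul_X_pow_succ (𝕜 : Type*) [Field 𝕜] [CharZero 𝕜] [Module 𝕜 R]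
    {Ψ Ω : R →+ R} {γ : R} {k : ℕ} (h : ∀ y, Ψ (y ^ (k + 1)) = γ * (y ^ k * Ω y)) (x : R) :
    mapAdd Ψ ((1 + C x * X) ^ (k + 1)) = C γ * ((1 + C x * X) ^ k * mapAdd Ω (1 + C x * X)) :=
  eq_of_forall_evalNat_eq 𝕜 fun m => by
    simpa only [map_mul, map_pow, evalNat_mapAdd, evalNat_C] using h _

end Linearization

end Polynomial

section CommutingMaps

variable {R : Type*} [Ring R]

theorem commute_map_one_of_commute_pow (𝕜 : Type*) [Field 𝕜] [CharZero 𝕜] [Module 𝕜 R]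
    {Ω : R →+ R} {k : ℕ} (hk : k ≠ 0)
    (h : ∀ y, Commute (y ^ k) (Ω y)) (x : R) : Commute (Ω 1) x := by
  have : IsAddTorsionFree R := .of_isTorsionFree 𝕜 R
  have h1 := congrArg (coeff · 1) (commute_one_add_C_mul_X_pow_mapAdd 𝕜 h x).eq
  simp only [mapAdd_one_add_C_mul_X, coeff_mul_C_add_C_mul_X_succ,
    coeff_C_add_C_mul_X_mul_succ, coeff_one_add_C_mul_X_pow, Nat.choose_one_right,
    Nat.choose_zero_right, pow_zero, pow_one, one_smul, one_mul, mul_one, smul_mul_assoc,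
    mul_smul_comm, add_left_inj, zero_add] at h1
  exact (nsmul_right_injective hk h1).symm

theorem commute_map_self_of_commute_pow (𝕜 : Type*) [Field 𝕜] [CharZero 𝕜] [Module 𝕜 R]
    {Ω : R →+ R} {k : ℕ} (hk : k ≠ 0)
    (h : ∀ y, Commute (y ^ k) (Ω y)) (x : R) : Commute (Ω x) x := by
  have : IsAddTorsionFree R := .of_isTorsionFree 𝕜 R
  have h2 := congrArg (coeff · 2) (commute_one_add_C_mul_X_pow_mapAdd 𝕜 h x).eq
  simp only [mapAdd_one_add_C_mul_X, coeff_mul_C_add_C_mul_X_succ,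
    coeff_C_add_C_mul_X_mul_succ, coeff_one_add_C_mul_X_pow, Nat.choose_one_right,
    pow_one, smul_mul_assoc, mul_smul_comm,
    (commute_map_one_of_commute_pow 𝕜 hk h (x ^ 2)).eq, add_right_inj] at h2
  exact (nsmul_right_injective hk h2).symm

theorem map_sq_add_sq_mul_map_one (𝕜 : Type*) [Field 𝕜] [CharZero 𝕜] [Module 𝕜 R]
    {Ψ Ω : R →+ R} {γ : R} {k : ℕ} (hk : k ≠ 0)
    (hγ : IsUnit γ) (h : ∀ y, Ψ (y ^ (k + 1)) = γ * (y ^ k * Ω y)) (x : R) :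
    Ω (x ^ 2) + x ^ 2 * Ω 1 = 2 • (x * Ω x) := by
  have c1 := congrArg (coeff · 1) (mapAdd_one_add_C_mul_X_pow_succ 𝕜 h (x ^ 2))
  have c2 := congrArg (coeff · 2) (mapAdd_one_add_C_mul_X_pow_succ 𝕜 h x)
  simp only [mapAdd_one_add_C_mul_X, coeff_mapAdd, coeff_C_mul, coeff_mul_C_add_C_mul_X_succ,
    coeff_one_add_C_mul_X_pow, Nat.choose_one_right, Nat.choose_zero_right, pow_one, pow_zero,
    one_smul, one_mul, zero_add, one_add_one_eq_two, smul_mul_assoc, map_nsmul] at c1 c2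
  apply hγ.mul_left_cancel
  simp only [mul_add, mul_smul_comm] at c1 c2 ⊢
  simp only [← Nat.cast_smul_eq_nsmul 𝕜, Nat.cast_choose_two] at c1 c2 ⊢
  have hk' : (k : 𝕜) ≠ 0 := Nat.cast_ne_zero.mpr hk
  linear_combination (norm := skip) (2 / k : 𝕜) • c2 - c1
  match_scalars <;> field_simp <;> ring

end CommutingMaps

theorem stmt_6_general {𝕜 R : Type*} [Field 𝕜] [CharZero 𝕜] [Ring R] [Algebra 𝕜 R]
    (n : ℕ) (hn : 1 < n)
    (γ : R) (hγu : IsUnit γ)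
    (Ψ Ω : R → R)
    (hΨadd : ∀ x y, Ψ (x + y) = Ψ x + Ψ y)
    (hΩadd : ∀ x y, Ω (x + y) = Ω x + Ω y)
    (h1 : ∀ x, Ψ (x ^ n) = γ * (x ^ (n - 1) * Ω x))
    (h2 : ∀ x, γ * (x ^ (n - 1) * Ω x) = γ * (Ω x * x ^ (n - 1))) :
    (∀ x, Ω x * x = x * Ω x) ∧
    ((∀ y, Ω 1 * y = y * Ω 1) →
      (∀ x, (Ω (x ^ 2) - Ω 1 * x ^ 2) =
        (Ω x - Ω 1 * x) * x + x * (Ω x - Ω 1 * x)) ∧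
      (∀ x, (Ω x - Ω 1 * x) * x = x * (Ω x - Ω 1 * x))) := by
  obtain ⟨k, rfl⟩ : ∃ k, n = k + 1 := ⟨n - 1, by omega⟩
  have hk : k ≠ 0 := by omega
  rw [Nat.add_sub_cancel] at h1 h2
  have hΩx : ∀ x, Commute (Ω x) x :=
    commute_map_self_of_commute_pow 𝕜 (Ω := .mk' Ω hΩadd) hk fun y => hγu.mul_left_cancel (h2 y)
  have hsq : ∀ x, Ω (x ^ 2) + x ^ 2 * Ω 1 = 2 • (x * Ω x) :=
    map_sq_add_sq_mul_map_one 𝕜 (Ψ := .mk' Ψ hΨadd) (Ω := .mk' Ω hΩadd) hk hγu h1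
  refine ⟨fun x => (hΩx x).eq, fun hc => ?_⟩
  have hcx : ∀ x, x * (Ω 1 * x) = Ω 1 * x * x := fun x => by rw [← mul_assoc, ← hc x]
  refine ⟨fun x => ?_, fun x => ?_⟩
  · rw [eq_sub_of_add_eq (hsq x), sub_mul, mul_sub, (hΩx x).eq, hcx, ← hc]
    noncomm_ring
  · rw [sub_mul, mul_sub, (hΩx x).eq, hcx]

/-- From the two-sided identity `Ψ(X^n) = γX^(n-1)Ω(X) = γΩ(X)X^(n-1)` on a unital
algebra over a field of characteristic zero (with `γ` central invertible), `Ω` is a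
commuting map, and if `Ω(1)` is central then `Δ(X) = Ω(X) − Ω(1)X` is a commuting
Jordan derivation. -/
theorem stmt_6 {𝕜 R : Type*} [Field 𝕜] [CharZero 𝕜] [Ring R] [Algebra 𝕜 R]
    (n : ℕ) (hn : 1 < n)
    (γ : R) (hγc : ∀ y : R, γ * y = y * γ) (hγu : IsUnit γ)
    (Ψ Ω : R → R)
    (hΨadd : ∀ x y, Ψ (x + y) = Ψ x + Ψ y)
    (hΩadd : ∀ x y, Ω (x + y) = Ω x + Ω y)
    (h1 : ∀ x, Ψ (x ^ n) = γ * (x ^ (n - 1) * Ω x))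
    (h2 : ∀ x, γ * (x ^ (n - 1) * Ω x) = γ * (Ω x * x ^ (n - 1))) :
    (∀ x, Ω x * x = x * Ω x) ∧
    ((∀ y, Ω 1 * y = y * Ω 1) →
      (∀ x, (Ω (x ^ 2) - Ω 1 * x ^ 2) =
        (Ω x - Ω 1 * x) * x + x * (Ω x - Ω 1 * x)) ∧
      (∀ x, (Ω x - Ω 1 * x) * x = x * (Ω x - Ω 1 * x))) :=
  stmt_6_general (𝕜 := 𝕜) n hn γ hγu Ψ Ω hΨadd hΩadd h1 h2
end

section
/- Let R be a unital algebra over a field of characteristic zero, n > 1 an integer, γ a central invertible element, and Ψ, Ω : R → R additive maps satisfying Ψ(X^n) = γ·X·Ω(X^{n−1}) = γ·Ω(X^{n−1})·X for all X ∈ R. Then, setting μ = nΨ − (n−2)γΩ, one has μ(X²) = 2γ·X·Ω(X) = 2γ·Ω(X)·X for all X ∈ R. -/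
/-!
Substitute `k • x + 1` (`k ∈ ℕ`) for `X`. Since `γ X Ω(X^{n-1})` is additive in `X` and in
`Ω(X^{n-1})`, both sides of `Ψ(X^n) = γ X Ω(X^{n-1})` become polynomials in `k` whose
coefficients are fixed combinations of `Ψ(x^j)`, `γ x Ω(x^j)` and `γ Ω(x^j)`. A polynomial with
coefficients in a vector space over a field of characteristic zero that vanishes at every natural
number is zero (Vandermonde, after applying linear functionals). The coefficient of `k²` gives
`C(n,2) Ψ(x²) = (n-1) γ x Ω(x) + C(n-1,2) γ Ω(x²)`, and multiplying by `2/(n-1)` yields the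
claim.
-/

open Finset

lemma eq_of_forall_sum_pow_smul_eq {𝕜 M : Type*} [Field 𝕜] [CharZero 𝕜]
    [AddCommGroup M] [Module 𝕜 M] {d : ℕ} {v w : ℕ → M}
    (h : ∀ k : ℕ, ∑ i ∈ range d, k ^ i • v i = ∑ i ∈ range d, k ^ i • w i) {i : ℕ}
    (hi : i < d) : v i = w i := by
  rw [← sub_eq_zero, ← Module.forall_dual_apply_eq_zero_iff 𝕜]
  intro φ
  have hφ : (fun j : Fin d => φ (v j - w j)) = 0 := by
    refine Matrix.eq_zero_of_forall_index_sum_pow_mul_eq_zero (f := fun j : Fin d => (j : 𝕜))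
      (fun a b hab => Fin.ext (Nat.cast_injective hab)) fun j => ?_
    rw [Fin.sum_univ_eq_sum_range (fun i => (j : 𝕜) ^ i * φ (v i - w i))]
    simpa [mul_sub, sum_sub_distrib, ← Nat.cast_smul_eq_nsmul 𝕜, sub_eq_zero]
      using congrArg φ (h j)
  exact congrFun hφ ⟨i, hi⟩

lemma smul_add_one_pow {R : Type*} [Ring R] (x : R) (k m : ℕ) :
    (k • x + 1) ^ m = ∑ j ∈ range (m + 1), k ^ j • m.choose j • x ^ j := by
  rw [(Commute.one_right _).add_pow]
  refine sum_congr rfl fun j _ => ?_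
  rw [one_pow, mul_one, smul_pow, ← nsmul_eq_mul', smul_comm]

lemma map_smul_add_one_pow {R M : Type*} [Ring R] [AddCommMonoid M] (f : R →+ M) (x : R)
    (k m : ℕ) :
    f ((k • x + 1) ^ m) = ∑ j ∈ range (m + 1), k ^ j • m.choose j • f (x ^ j) := by
  simp only [smul_add_one_pow, map_sum, map_nsmul]

lemma smul_sum_range_pow_smul {M : Type*} [AddCommMonoid M] (k d : ℕ) (v : ℕ → M) :
    k • ∑ j ∈ range d, k ^ j • v j =
      ∑ j ∈ range (d + 1), k ^ j • (if j = 0 then 0 else v (j - 1)) := by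
  rw [sum_range_succ', smul_sum]
  simp [pow_succ', mul_smul]

theorem nsmul_map_sq_eq_of_map_pow_eq {𝕜 R N M : Type*} [Field 𝕜] [CharZero 𝕜] [Ring R]
    [AddCommGroup N] [AddCommGroup M] [Module 𝕜 M] (Ψ : R →+ M) (Ω : R →+ N)
    (B : R →+ N →+ M) {m : ℕ} (h : ∀ x, Ψ (x ^ (m + 2)) = B x (Ω (x ^ (m + 1)))) (x : R) :
    (m + 2) • Ψ (x ^ 2) - m • B 1 (Ω (x ^ 2)) = 2 • B x (Ω x) := by
  have hpoly (k : ℕ) : ∑ j ∈ range (m + 3), k ^ j • ((m + 2).choose j • Ψ (x ^ j)) =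
      ∑ j ∈ range (m + 3), k ^ j •
        ((if j = 0 then 0 else (m + 1).choose (j - 1) • B x (Ω (x ^ (j - 1)))) +
          (m + 1).choose j • B 1 (Ω (x ^ j))) := by
    have hext : ∑ j ∈ range (m + 2), k ^ j • ((m + 1).choose j • B 1 (Ω (x ^ j))) =
        ∑ j ∈ range (m + 3), k ^ j • ((m + 1).choose j • B 1 (Ω (x ^ j))) := by
      rw [sum_range_succ _ (m + 2), Nat.choose_eq_zero_of_lt (by omega), zero_smul, smul_zero,
        add_zero]
    calc ∑ j ∈ range (m + 3), k ^ j • ((m + 2).choose j • Ψ (x ^ j))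
        = Ψ ((k • x + 1) ^ (m + 2)) := (map_smul_add_one_pow Ψ x k (m + 2)).symm
      _ = k • ((B x).comp Ω) ((k • x + 1) ^ (m + 1)) +
            ((B 1).comp Ω) ((k • x + 1) ^ (m + 1)) := by
        rw [h, map_add, map_nsmul]; rfl
      _ = _ := by
        rw [map_smul_add_one_pow, map_smul_add_one_pow, smul_sum_range_pow_smul]
        simp only [AddMonoidHom.comp_apply, hext, smul_add, sum_add_distrib]
  have hcoeff := eq_of_forall_sum_pow_smul_eq (𝕜 := 𝕜) hpoly (i := 2) (by omega)
  simp only [two_ne_zero, if_false, Nat.add_one_sub_one, Nat.choose_one_right, pow_one] at hcoeff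
  have hc₁ : (m + 1) * (m + 2) = 2 * (m + 2).choose 2 := by
    rw [mul_comm 2, ← Nat.add_one_mul_choose_eq, Nat.choose_one_right, mul_comm]
  have hc₂ : (m + 1) * m = 2 * (m + 1).choose 2 := by
    rw [mul_comm 2, ← Nat.add_one_mul_choose_eq, Nat.choose_one_right]
  have : IsAddTorsionFree M := .of_isTorsionFree 𝕜 M
  apply nsmul_right_injective (show m + 1 ≠ 0 by omega)
  calc (m + 1) • ((m + 2) • Ψ (x ^ 2) - m • B 1 (Ω (x ^ 2)))
      = 2 • ((m + 2).choose 2 • Ψ (x ^ 2) - (m + 1).choose 2 • B 1 (Ω (x ^ 2))) := by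
        rw [smul_sub, smul_sub, smul_smul, smul_smul, smul_smul, smul_smul, hc₁, hc₂]
    _ = (m + 1) • 2 • B x (Ω x) := by rw [hcoeff, add_sub_cancel_right, smul_comm]

theorem stmt_18_general {𝕜 R : Type*} [Field 𝕜] [CharZero 𝕜] [Ring R] [Algebra 𝕜 R]
    (n : ℕ) (hn : 1 < n)
    (γ : R)
    (Ψ Ω : R → R)
    (hΨadd : ∀ x y, Ψ (x + y) = Ψ x + Ψ y)
    (hΩadd : ∀ x y, Ω (x + y) = Ω x + Ω y)
    (h1 : ∀ x, Ψ (x ^ n) = γ * (x * Ω (x ^ (n - 1))))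
    (h2 : ∀ x, γ * (x * Ω (x ^ (n - 1))) = γ * (Ω (x ^ (n - 1)) * x)) :
    ∀ x : R, (n • Ψ (x ^ 2) - (n - 2) • (γ * Ω (x ^ 2))) = 2 • (γ * (x * Ω x)) ∧
      (n • Ψ (x ^ 2) - (n - 2) • (γ * Ω (x ^ 2))) = 2 • (γ * (Ω x * x)) := by
  obtain ⟨m, rfl⟩ : ∃ m, n = m + 2 := ⟨n - 2, by omega⟩
  intro x
  have hleft := nsmul_map_sq_eq_of_map_pow_eq (𝕜 := 𝕜) (.mk' Ψ hΨadd) (.mk' Ω hΩadd)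
    (AddMonoidHom.mul.compr₂ (AddMonoidHom.mulLeft γ)) h1 x
  have hright := nsmul_map_sq_eq_of_map_pow_eq (𝕜 := 𝕜) (.mk' Ψ hΨadd) (.mk' Ω hΩadd)
    (AddMonoidHom.mul.flip.compr₂ (AddMonoidHom.mulLeft γ)) (fun y => (h1 y).trans (h2 y)) x
  simp only [AddMonoidHom.compr₂_apply, AddMonoidHom.flip_apply, AddMonoidHom.mul_apply,
    AddMonoidHom.coe_mulLeft, AddMonoidHom.mk'_apply, one_mul, mul_one] at hleft hright
  exact ⟨hleft, hright⟩

/-- The reduction step of Corollary 2.2: from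
`Ψ(X^n) = γXΩ(X^{n-1}) = γΩ(X^{n-1})X` on a unital algebra over a field of
characteristic zero (with `γ` central invertible), the map `μ = nΨ − (n−2)γΩ`
satisfies `μ(X²) = 2γXΩ(X) = 2γΩ(X)X`. -/
theorem stmt_18 {𝕜 R : Type*} [Field 𝕜] [CharZero 𝕜] [Ring R] [Algebra 𝕜 R]
    (n : ℕ) (hn : 1 < n)
    (γ : R) (hγc : ∀ y : R, γ * y = y * γ) (hγu : IsUnit γ)
    (Ψ Ω : R → R)
    (hΨadd : ∀ x y, Ψ (x + y) = Ψ x + Ψ y)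
    (hΩadd : ∀ x y, Ω (x + y) = Ω x + Ω y)
    (h1 : ∀ x, Ψ (x ^ n) = γ * (x * Ω (x ^ (n - 1))))
    (h2 : ∀ x, γ * (x * Ω (x ^ (n - 1))) = γ * (Ω (x ^ (n - 1)) * x)) :
    ∀ x : R, (n • Ψ (x ^ 2) - (n - 2) • (γ * Ω (x ^ 2))) = 2 • (γ * (x * Ω x)) ∧
      (n • Ψ (x ^ 2) - (n - 2) • (γ * Ω (x ^ 2))) = 2 • (γ * (Ω x * x)) :=
  stmt_18_general (𝕜 := 𝕜) n hn γ Ψ Ω hΨadd hΩadd h1 h2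
end
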